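/- arXiv:1409.1005 — 2 statements merged into one kernel-verified Lean document; each statement's English description precedes it below -/
import Mathlib

section
/- Let G be the simple graph on vertex set {a,b,c,d,e} with edge set {{a,b},{b,c},{c,d},{d,e},{e,a},{b,d}}. Then every planar linear arrangement of G (i.e., every bijection π from the vertices of G to {1,2,3,4,5} in which no two edges of G cross) has cost strictly greater than 9; equivalently, its cost is at least 10. -/
namespace CounterexampleMinLA

/-- The vertex `a`. -/
def a : Fin 5 := 0
/-- The vertex `b`. -/
def b : Fin 5 := 1
/-- The vertex `c`. -/
def c : Fin 5 := 2
/-- The vertex `d`. -/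
def d : Fin 5 := 3
/-- The vertex `e`. -/
def e : Fin 5 := 4

/-- The edge set of the graph `G`: the 5-cycle a-b-c-d-e-a together with the chord {b,d}. -/
def edges : Finset (Sym2 (Fin 5)) := {s(a,b), s(b,c), s(c,d), s(d,e), s(e,a), s(b,d)}

/-- The edges of the 5-cycle a-b-c-d-e-a. -/
def cycleEdges : Finset (Sym2 (Fin 5)) := {s(a,b), s(b,c), s(c,d), s(d,e), s(e,a)}

/-- A linear arrangement: a bijection from the vertices onto the positions {1,…,5}. -/
def IsArrangement (π : Fin 5 → ℕ) : Prop :=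
  Set.BijOn π Set.univ (Set.Icc 1 5)

/-- The cost of an arrangement: the sum over all edges {u,v} of |π(u) − π(v)|. -/
def cost (π : Fin 5 → ℕ) : ℤ :=
  ∑ ed ∈ edges,
    Sym2.lift ⟨fun u v => |(π u : ℤ) - (π v : ℤ)|, fun u v => abs_sub_comm _ _⟩ ed

/-- Two distinct edges cross in `π` if their endpoints can be labelled `{u,v}`, `{x,y}`
with `π u < π x < π v < π y`. -/
def Cross (π : Fin 5 → ℕ) (e₁ e₂ : Sym2 (Fin 5)) : Prop :=
  e₁ ≠ e₂ ∧ ∃ u v x y, e₁ = s(u, v) ∧ e₂ = s(x, y) ∧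
    π u < π x ∧ π x < π v ∧ π v < π y

/-- An arrangement is planar if no two edges of the graph cross in it. -/
def IsPlanar (π : Fin 5 → ℕ) : Prop :=
  ∀ e₁ ∈ edges, ∀ e₂ ∈ edges, ¬ Cross π e₁ e₂

/-- `e₁` dominates `e₂` in `π` if they are distinct and their endpoints can be labelled
`e₁ = {x,y}`, `e₂ = {u,v}` with `π u ≤ π x < π y ≤ π v`. -/
def Dominates (π : Fin 5 → ℕ) (e₁ e₂ : Sym2 (Fin 5)) : Prop :=
  e₁ ≠ e₂ ∧ ∃ x y u v, e₁ = s(x, y) ∧ e₂ = s(u, v) ∧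
    π u ≤ π x ∧ π x < π y ∧ π y ≤ π v

/- auxiliary machinery -/

def ep : Fin 6 → Fin 5 × Fin 5 := ![(0,1),(1,2),(2,3),(3,4),(4,0),(1,3)]

def orient (p : Fin 5 × Fin 5) (o : Bool) : Fin 5 × Fin 5 := if o then p else (p.2, p.1)

def planarN (g : Fin 5 → Fin 5) : Prop :=
  ∀ i j : Fin 6, i ≠ j → ∀ o₁ o₂ : Bool,
    (g (orient (ep i) o₁).1 < g (orient (ep j) o₂).1 ∧
     g (orient (ep j) o₂).1 < g (orient (ep i) o₁).2 ∧
     g (orient (ep i) o₁).2 < g (orient (ep j) o₂).2) → False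

instance (g : Fin 5 → Fin 5) : Decidable (planarN g) := by unfold planarN; infer_instance

def dN (p q : Fin 5) : ℕ := max p.1 q.1 - min p.1 q.1

def costN (g : Fin 5 → Fin 5) : ℕ :=
  dN (g 0) (g 1) + dN (g 1) (g 2) + dN (g 2) (g 3) + dN (g 3) (g 4) + dN (g 4) (g 0) + dN (g 1) (g 3)

set_option maxRecDepth 10000 in
lemma key : ∀ v0 v1 v2 v3 v4 : Fin 5, (∀ x y, ![v0,v1,v2,v3,v4] x = ![v0,v1,v2,v3,v4] y → x = y) →
    planarN ![v0,v1,v2,v3,v4] → 10 ≤ costN ![v0,v1,v2,v3,v4] := by decide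

lemma mem_edges : ∀ (i : Fin 6) (o : Bool),
    s((orient (ep i) o).1, (orient (ep i) o).2) ∈ edges := by decide

lemma ne_edges : ∀ (i j : Fin 6), i ≠ j → ∀ o₁ o₂ : Bool,
    s((orient (ep i) o₁).1, (orient (ep i) o₁).2) ≠ s((orient (ep j) o₂).1, (orient (ep j) o₂).2) := by
  decide

lemma cost_eq (π : Fin 5 → ℕ) : cost π =
    |(π 0:ℤ) - π 1| + |(π 1:ℤ) - π 2| + |(π 2:ℤ) - π 3| + |(π 3:ℤ) - π 4|
      + |(π 4:ℤ) - π 0| + |(π 1:ℤ) - π 3| := by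
  simp [cost, edges, Finset.sum_insert, a, b, c, d, e]
  ring

lemma term_eq (p q : ℕ) : |((p+1 : ℕ) : ℤ) - ((q+1 : ℕ) : ℤ)| = ((max p q - min p q : ℕ) : ℤ) := by
  rcases le_total p q with h | h
  · rw [abs_of_nonpos (by push_cast; omega), max_eq_right h, min_eq_left h]; push_cast; omega
  · rw [abs_of_nonneg (by push_cast; omega), max_eq_left h, min_eq_right h]; push_cast; omega

/-- Every planar linear arrangement of `G` has cost strictly greater than 9
(equivalently, cost at least 10). -/
theorem planar_arrangement_cost_gt_nine (π : Fin 5 → ℕ)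
    (harr : IsArrangement π) (hpl : IsPlanar π) :
    9 < cost π ∧ 10 ≤ cost π := by
  obtain ⟨hmaps, hinj, -⟩ := harr
  have hbd : ∀ i : Fin 5, 1 ≤ π i ∧ π i ≤ 5 := fun i => hmaps (Set.mem_univ i)
  have hlt : ∀ i : Fin 5, π i - 1 < 5 := fun i => by have := hbd i; omega
  set g : Fin 5 → Fin 5 := fun i => ⟨π i - 1, hlt i⟩ with hg
  have hπ : ∀ i, π i = (g i).1 + 1 := fun i => by
    have := hbd i; simp [hg]; omega
  have hginj : ∀ x y, g x = g y → x = y := by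
    intro x y hxy
    apply hinj (Set.mem_univ x) (Set.mem_univ y)
    have := congrArg Fin.val hxy
    simp [hg] at this
    have hx := hbd x; have hy := hbd y; omega
  have conv : ∀ s t : Fin 5, g s < g t → π s < π t := by
    intro s t hst
    rw [hπ s, hπ t]
    exact Nat.succ_lt_succ hst
  have hplan : planarN g := by
    intro i j hij o₁ o₂ ⟨h1, h2, h3⟩
    exact hpl _ (mem_edges i o₁) _ (mem_edges j o₂)
      ⟨ne_edges i j hij o₁ o₂, _, _, _, _, rfl, rfl, conv _ _ h1, conv _ _ h2, conv _ _ h3⟩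
  have hM : ![g 0, g 1, g 2, g 3, g 4] = g := by
    funext i; fin_cases i <;> rfl
  have hkey := key (g 0) (g 1) (g 2) (g 3) (g 4)
  rw [hM] at hkey
  have h10 : 10 ≤ costN g := hkey hginj hplan
  have hc : cost π = (costN g : ℤ) := by
    rw [cost_eq, hπ 0, hπ 1, hπ 2, hπ 3, hπ 4, term_eq, term_eq, term_eq, term_eq, term_eq,
      term_eq]
    simp only [costN, dN, Nat.cast_add]
  rw [hc]
  constructor <;> omega

end CounterexampleMinLA
end

section
/- Let G be the simple graph on vertex set {a,b,c,d,e} with edge set {{a,b},{b,c},{c,d},{d,e},{e,a},{b,d}}, and let E_C = {{a,b},{b,c},{c,d},{d,e},{e,a}} be the set of edges of the 5-cycle. Let π be any planar linear arrangement of G and let {u,v} ∈ E_C. If exactly one or exactly two vertices of G are placed at positions strictly between π(u) and π(v) (i.e., 2 ≤ |π(u) − π(v)| ≤ 3), then some two edges of G cross in π; hence this situation is impossible in a planar arrangement. -/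
namespace CounterexampleMinLA

/-- Directed list of the edges of `G`. -/
def edgeList : List (Fin 5 × Fin 5) := [(a,b),(b,c),(c,d),(d,e),(e,a),(b,d)]

/-- Fast boolean crossing test. -/
def crossB (π : Fin 5 → ℕ) : Bool :=
  edgeList.any fun pq => edgeList.any fun rt =>
    decide (min (π pq.1) (π pq.2) < min (π rt.1) (π rt.2)) &&
    decide (min (π rt.1) (π rt.2) < max (π pq.1) (π pq.2)) &&
    decide (max (π pq.1) (π pq.2) < max (π rt.1) (π rt.2))

lemma mem_edges_of : ∀ pq ∈ edgeList, s(pq.1, pq.2) ∈ edges := by decide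

lemma cross_of (π : Fin 5 → ℕ) (p q r t : Fin 5)
    (hmm : min (π p) (π q) < min (π r) (π t))
    (hmx : min (π r) (π t) < max (π p) (π q))
    (hxx : max (π p) (π q) < max (π r) (π t)) :
    Cross π s(p, q) s(r, t) := by
  constructor
  · intro hEq
    rw [Sym2.eq_iff] at hEq
    rcases hEq with ⟨hp, hq⟩ | ⟨hp, hq⟩ <;> subst hp <;> subst hq <;> omega
  · rcases le_total (π p) (π q) with hpq | hpq <;> rcases le_total (π r) (π t) with hrt | hrt
    · exact ⟨p, q, r, t, rfl, rfl, by omega, by omega, by omega⟩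
    · exact ⟨p, q, t, r, rfl, Sym2.eq_swap.symm, by omega, by omega, by omega⟩
    · exact ⟨q, p, r, t, Sym2.eq_swap.symm, rfl, by omega, by omega, by omega⟩
    · exact ⟨q, p, t, r, Sym2.eq_swap.symm, Sym2.eq_swap.symm, by omega, by omega, by omega⟩

lemma crossB_correct (π : Fin 5 → ℕ) (h : crossB π = true) :
    ∃ e₁ ∈ edges, ∃ e₂ ∈ edges, Cross π e₁ e₂ := by
  unfold crossB at h
  rw [List.any_eq_true] at h
  obtain ⟨pq, hpq, h⟩ := h
  rw [List.any_eq_true] at h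
  obtain ⟨rt, hrt, h⟩ := h
  simp only [Bool.and_eq_true, decide_eq_true_eq] at h
  exact ⟨s(pq.1, pq.2), mem_edges_of _ hpq, s(rt.1, rt.2), mem_edges_of _ hrt,
    cross_of π pq.1 pq.2 rt.1 rt.2 h.1.1 h.1.2 h.2⟩

set_option maxRecDepth 20000 in
set_option maxHeartbeats 4000000 in
lemma key_s15 : ∀ σ : Equiv.Perm (Fin 5), ∀ u v : Fin 5, s(u, v) ∈ cycleEdges →
    (((σ v : ℕ) + 2 ≤ (σ u : ℕ) ∧ (σ u : ℕ) ≤ (σ v : ℕ) + 3) ∨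
      ((σ u : ℕ) + 2 ≤ (σ v : ℕ) ∧ (σ v : ℕ) ≤ (σ u : ℕ) + 3)) →
    crossB (fun i => (σ i : ℕ) + 1) = true := by decide

/-- If in a linear arrangement `π` of `G` some cycle edge {u,v} has exactly one or exactly
two vertices placed strictly between its endpoints (i.e. 2 ≤ |π(u) − π(v)| ≤ 3), then some
two edges of `G` cross in `π`; hence `π` is not planar, so this situation is impossible in
a planar arrangement. -/
theorem gap_two_or_three_forces_crossing (π : Fin 5 → ℕ)
    (harr : IsArrangement π) (u v : Fin 5) (huv : s(u, v) ∈ cycleEdges)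
    (h2 : 2 ≤ |(π u : ℤ) - (π v : ℤ)|) (h3 : |(π u : ℤ) - (π v : ℤ)| ≤ 3) :
    (∃ e₁ ∈ edges, ∃ e₂ ∈ edges, Cross π e₁ e₂) ∧ ¬ IsPlanar π := by
  have h1 : ∀ i, 1 ≤ π i ∧ π i ≤ 5 := fun i => harr.mapsTo (Set.mem_univ i)
  have hf : ∀ i, π i - 1 < 5 := fun i => by have := h1 i; omega
  set f : Fin 5 → Fin 5 := fun i => ⟨π i - 1, hf i⟩ with hfdef
  have hinj : Function.Injective f := by
    intro i j hij
    apply harr.injOn (Set.mem_univ i) (Set.mem_univ j)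
    have : π i - 1 = π j - 1 := congrArg Fin.val hij
    have hi := h1 i; have hj := h1 j; omega
  let σ : Equiv.Perm (Fin 5) := Equiv.ofBijective f (Finite.injective_iff_bijective.mp hinj)
  have hπ : ∀ i, π i = (σ i : ℕ) + 1 := by
    intro i
    have : (σ i : ℕ) = π i - 1 := rfl
    have := h1 i; omega
  have hgapπ : (π v + 2 ≤ π u ∧ π u ≤ π v + 3) ∨ (π u + 2 ≤ π v ∧ π v ≤ π u + 3) := by
    rcases abs_cases ((π u : ℤ) - (π v : ℤ)) with ⟨hh, _⟩ | ⟨hh, _⟩ <;>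
      rw [hh] at h2 h3 <;> omega
  have hgap : ((σ v : ℕ) + 2 ≤ (σ u : ℕ) ∧ (σ u : ℕ) ≤ (σ v : ℕ) + 3) ∨
      ((σ u : ℕ) + 2 ≤ (σ v : ℕ) ∧ (σ v : ℕ) ≤ (σ u : ℕ) + 3) := by
    have hu := hπ u; have hv := hπ v; omega
  have hB := key_s15 σ u v huv hgap
  have hπ' : π = fun i => (σ i : ℕ) + 1 := funext hπ
  rw [hπ']
  have hE := crossB_correct _ hB
  refine ⟨hE, fun hpl => ?_⟩
  obtain ⟨e₁, he₁, e₂, he₂, hc⟩ := hE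
  exact hpl e₁ he₁ e₂ he₂ hc

end CounterexampleMinLA
end
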